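/- For u ∈ (0,1), define G(u) = 2u/π + 2u(1−u)cot(πu), extended by G(0)=2/π·0+2/π = 2/π (limit as u→0⁺ equals 2/π) and G(1) = 2/π. Then 0 ≤ G(u) ≤ 2/π for all u ∈ [0,1]. -/

import Mathlib

/-
With `x = πu ∈ (0, π)`, clearing the positive denominator `π sin x` gives
`G u = 2u (sin x + (π - x) cos x) / (π sin x)`. Both bounds then reduce to the
elementary inequality `t cos t ≤ sin t` on `[0, π]`: at `t = π - x` it says the numerator
is nonnegative, and at `t = x`, multiplied by `1 - u`, it says `G u ≤ 2/π`.
-/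

/-- Selberg's function `G(u) = 2u/π + 2u(1-u)cot(πu)`, with its limit values at `0` and `1`. -/
noncomputable def G (u : ℝ) : ℝ :=
  if u = 0 ∨ u = 1 then 2 / Real.pi
  else 2 * u / Real.pi + 2 * u * (1 - u) * (Real.cos (Real.pi * u) / Real.sin (Real.pi * u))

open Real

lemma mul_cos_le_sin {x : ℝ} (hx₀ : 0 ≤ x) (hxπ : x ≤ π) : x * cos x ≤ sin x := by
  rcases lt_or_ge x (π / 2) with hx | hx
  · have hcos : 0 < cos x := cos_pos_of_mem_Ioo ⟨by linarith [pi_pos], hx⟩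
    have htan := le_tan hx₀ hx
    rwa [tan_eq_sin_div_cos, le_div_iff₀ hcos] at htan
  · have hcos : cos x ≤ 0 := cos_nonpos_of_pi_div_two_le_of_le hx (by linarith [pi_pos])
    nlinarith [sin_nonneg_of_nonneg_of_le_pi hx₀ hxπ]

lemma G_eq_div {u : ℝ} (hu₀ : 0 < u) (hu₁ : u < 1) :
    G u = 2 * u * (sin (π * u) + (π - π * u) * cos (π * u)) / (π * sin (π * u)) := by
  have hsin : sin (π * u) ≠ 0 :=
    (sin_pos_of_pos_of_lt_pi (by positivity) (by nlinarith [pi_pos])).ne'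
  rw [G, if_neg (by rintro (rfl | rfl) <;> linarith), mul_div_assoc', div_add_div _ _ pi_ne_zero hsin]
  ring

lemma G_nonneg {u : ℝ} (hu : u ∈ Set.Icc (0 : ℝ) 1) : 0 ≤ G u := by
  rcases eq_or_lt_of_le hu.1 with rfl | hu₀
  · simp [G]; positivity
  rcases eq_or_lt_of_le hu.2 with rfl | hu₁
  · simp [G]; positivity
  have hsin : 0 < sin (π * u) := sin_pos_of_pos_of_lt_pi (by positivity) (by nlinarith [pi_pos])
  have hreflect := mul_cos_le_sin (x := π - π * u) (by nlinarith [pi_pos]) (by nlinarith [pi_pos])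
  rw [cos_pi_sub, sin_pi_sub] at hreflect
  rw [G_eq_div hu₀ hu₁]
  apply div_nonneg _ (by positivity)
  nlinarith

lemma G_le_two_div_pi {u : ℝ} (hu : u ∈ Set.Icc (0 : ℝ) 1) : G u ≤ 2 / π := by
  rcases eq_or_lt_of_le hu.1 with rfl | hu₀
  · simp [G]
  rcases eq_or_lt_of_le hu.2 with rfl | hu₁
  · simp [G]
  have hsin : 0 < sin (π * u) := sin_pos_of_pos_of_lt_pi (by positivity) (by nlinarith [pi_pos])
  have hkey := mul_cos_le_sin (x := π * u) (by positivity) (by nlinarith [pi_pos])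
  have hnum : u * (sin (π * u) + (π - π * u) * cos (π * u)) ≤ sin (π * u) := by
    nlinarith [mul_le_mul_of_nonneg_left hkey (sub_nonneg.2 hu₁.le)]
  rw [G_eq_div hu₀ hu₁, div_le_div_iff₀ (by positivity) pi_pos]
  nlinarith [mul_le_mul_of_nonneg_left hnum pi_pos.le]

theorem stmt_19 : ∀ u ∈ Set.Icc (0 : ℝ) 1, 0 ≤ G u ∧ G u ≤ 2 / Real.pi :=
  fun _ hu => ⟨G_nonneg hu, G_le_two_div_pi hu⟩
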